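/- For every pair of integers (r,s) with 3 ≤ r ≤ s, there exists a connected bipartite graph G₁ with stable sets of sizes r and s such that λ(Ḡ₁) = λ(G₁) − 1, and there exists a connected bipartite graph G₂ with stable sets of sizes r and s such that λ(Ḡ₂) = λ(G₂). -/

import Mathlib

open SimpleGraph

/-- `S` is a dominating set of `G`: every vertex outside `S` has a neighbor in `S`. -/
def isDomSet {α : Type*} (G : SimpleGraph α) (S : Set α) : Prop :=
  ∀ v ∉ S, ∃ u ∈ S, G.Adj v u

/-- `S` is a locating-dominating set (LD-set) of `G`. -/
def isLDSet {α : Type*} (G : SimpleGraph α) (S : Set α) : Prop :=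
  isDomSet G S ∧ ∀ u ∉ S, ∀ v ∉ S, u ≠ v →
    G.neighborSet u ∩ S ≠ G.neighborSet v ∩ S

/-- The location-domination number `λ(G)`. -/
noncomputable def ldNum {α : Type*} (G : SimpleGraph α) : ℕ :=
  sInf {n | ∃ S : Set α, isLDSet G S ∧ S.ncard = n}

/-- The global location-domination number `λ_g(G)`. -/
noncomputable def gldNum {α : Type*} (G : SimpleGraph α) : ℕ :=
  sInf {n | ∃ S : Set α, isLDSet G S ∧ isLDSet Gᶜ S ∧ S.ncard = n}

/-- `G` is bipartite with stable sets `U` and `W`. -/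
def bipartiteWith {α : Type*} (G : SimpleGraph α) (U W : Set α) : Prop :=
  U ∪ W = Set.univ ∧ Disjoint U W ∧
    ∀ ⦃u v : α⦄, G.Adj u v → (u ∈ U ∧ v ∈ W) ∨ (u ∈ W ∧ v ∈ U)

/-!
`G₁` is the double star (centres `a ∈ U`, `b ∈ W`; `a` is joined to all of `W`, `b` to all of `U`)
and `G₂` is `K_{r,s}`. Two twins, i.e. vertices with the same neighbours apart from each other,
cannot both lie outside an LD-set, and twins of `G` are twins of `Gᶜ`. In `K_{r,s}` and in its
complement the two sides are twin classes, so at most two vertices lie outside an LD-set and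
`λ = n - 2` for both. In the double star the leaves at a centre are twins, and a leaf outside an
LD-set forces its centre in, so again `λ = n - 2`. In the complement, once both centres are outside
`S`, every leaf outside `S` is adjacent to all of `S`, and at most one vertex outside an LD-set can
be; this gives `λ(Ḡ₁) = n - 3`.
-/

open Set Function

section Twins

variable {V : Type*} {G : SimpleGraph V} {S T A B L : Set V} {u v c : V}

/-- Twins up to the edge between them; unlike equality of open or of closed neighbourhoods, this is
invariant under taking the complement. -/
def AreTwins (G : SimpleGraph V) (u v : V) : Prop :=
  ∀ x, x ≠ u → x ≠ v → (G.Adj u x ↔ G.Adj v x)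

lemma AreTwins.of_neighborSet_eq (h : G.neighborSet u = G.neighborSet v) : AreTwins G u v :=
  fun x _ _ => Set.ext_iff.mp h x

lemma areTwins_compl : AreTwins Gᶜ u v ↔ AreTwins G u v := by
  refine forall_congr' fun x => imp_congr_right fun hu => imp_congr_right fun hv => ?_
  simp [compl_adj, hu.symm, hv.symm, not_iff_not]

lemma isLDSet.mem_or_mem_of_areTwins (hS : isLDSet G S) (huv : u ≠ v) (h : AreTwins G u v) :
    u ∈ S ∨ v ∈ S := by
  by_contra! ⟨hu, hv⟩
  refine hS.2 u hu v hv huv (Set.ext fun x => and_congr_left fun hx => ?_)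
  exact h x (ne_of_mem_of_not_mem hx hu) (ne_of_mem_of_not_mem hx hv)

lemma isLDSet.subsingleton_sdiff (hS : isLDSet G S) (hA : A.Pairwise (AreTwins G)) :
    (A \ S).Subsingleton := by
  intro u hu v hv
  by_contra huv
  rcases hS.mem_or_mem_of_areTwins huv (hA hu.1 hv.1 huv) with h | h
  exacts [hu.2 h, hv.2 h]

lemma isDomSet.mem_of_neighborSet_eq (hS : isDomSet G S) (hv : v ∉ S)
    (h : G.neighborSet v = {c}) : c ∈ S := by
  obtain ⟨u, hu, huv⟩ := hS v hv
  rwa [show u = c from (h ▸ huv : u ∈ ({c} : Set V))] at hu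

lemma isLDSet.subsingleton_insert_sdiff (hS : isLDSet G S)
    (hL : ∀ v ∈ L, G.neighborSet v = {c}) : (insert c L \ S).Subsingleton := by
  by_cases hc : c ∈ S
  · rw [insert_sdiff_of_mem _ hc]
    exact hS.subsingleton_sdiff fun u hu v hv _ =>
      .of_neighborSet_eq ((hL u hu).trans (hL v hv).symm)
  · refine (subsingleton_singleton (a := c)).anti fun v ⟨hvL, hvS⟩ => ?_
    rcases hvL with rfl | hvL
    · rfl
    · exact absurd (hS.1.mem_of_neighborSet_eq hvS (hL v hvL)) hc

lemma isLDSet.subsingleton_of_subset_neighborSet (hS : isLDSet G S) :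
    {v | v ∉ S ∧ S ⊆ G.neighborSet v}.Subsingleton := by
  rintro u ⟨hu, huS⟩ v ⟨hv, hvS⟩
  by_contra huv
  exact hS.2 u hu v hv huv (by rw [inter_eq_right.mpr huS, inter_eq_right.mpr hvS])

lemma subset_neighborSet_compl (hv : v ∉ S) (h : Disjoint (G.neighborSet v) S) :
    S ⊆ Gᶜ.neighborSet v :=
  fun _ hx => ⟨(ne_of_mem_of_not_mem hx hv).symm, fun hadj => h.notMem_of_mem_left hadj hx⟩

lemma isLDSet_compl_iff : isLDSet G Tᶜ ↔
    (∀ v ∈ T, ∃ x ∉ T, G.Adj v x) ∧ T.Pairwise (Ne on fun v => G.neighborSet v \ T) := by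
  simp only [isLDSet, isDomSet, mem_compl_iff, not_not, ← sdiff_eq]
  rfl

lemma neighborSet_sdiff_ne_of_adj {x : V} (hx : x ∉ T) (hu : G.Adj u x) (hv : ¬G.Adj v x) :
    G.neighborSet u \ T ≠ G.neighborSet v \ T :=
  ne_of_mem_of_not_mem' (show x ∈ G.neighborSet u \ T from ⟨hu, hx⟩) fun h => hv h.1

variable [Finite V]

lemma ncard_union_sdiff_le_two (hA : (A \ S).Subsingleton) (hB : (B \ S).Subsingleton) :
    ((A ∪ B) \ S).ncard ≤ 2 := by
  rw [union_sdiff_distrib]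
  exact (ncard_union_le _ _).trans
    (add_le_add (ncard_le_one_iff_subsingleton.mpr hA) (ncard_le_one_iff_subsingleton.mpr hB))

lemma isLDSet.ncard_compl_le_two_of_pairwise_areTwins (hS : isLDSet G S) (hAB : A ∪ B = univ)
    (hA : A.Pairwise (AreTwins G)) (hB : B.Pairwise (AreTwins G)) : Sᶜ.ncard ≤ 2 := by
  rw [compl_eq_univ_sdiff, ← hAB]
  exact ncard_union_sdiff_le_two (hS.subsingleton_sdiff hA) (hS.subsingleton_sdiff hB)

lemma ldNum_eq_card_sub {k : ℕ} (hS : isLDSet G S) (hSk : Sᶜ.ncard = k)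
    (hmin : ∀ T, isLDSet G T → Tᶜ.ncard ≤ k) : ldNum G = Nat.card V - k := by
  have hcard : ∀ T : Set V, T.ncard = Nat.card V - Tᶜ.ncard := fun T => by
    rw [← ncard_add_ncard_compl T]; omega
  refine le_antisymm (Nat.sInf_le ⟨S, hS, by rw [hcard, hSk]⟩) (le_csInf ⟨_, S, hS, rfl⟩ ?_)
  rintro n ⟨T, hT, rfl⟩
  rw [hcard T]
  exact Nat.sub_le_sub_left (hmin T hT) _

end Twins

section DoubleStar

variable {α β : Type*} (a : α) (b : β)

def doubleStar : SimpleGraph (α ⊕ β) where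
  Adj
    | .inl x, .inr y | .inr y, .inl x => x = a ∨ y = b
    | _, _ => False
  symm := ⟨by rintro (_ | _) (_ | _) <;> simp⟩
  loopless := ⟨by rintro (_ | _) <;> simp⟩

variable {a b} {x x' : α} {y y' : β}

@[simp] lemma doubleStar_adj_inl_inr : (doubleStar a b).Adj (.inl x) (.inr y) ↔ x = a ∨ y = b :=
  Iff.rfl

@[simp] lemma doubleStar_adj_inr_inl : (doubleStar a b).Adj (.inr y) (.inl x) ↔ x = a ∨ y = b :=
  Iff.rfl

@[simp] lemma not_doubleStar_adj_inl_inl : ¬(doubleStar a b).Adj (.inl x) (.inl x') := id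

@[simp] lemma not_doubleStar_adj_inr_inr : ¬(doubleStar a b).Adj (.inr y) (.inr y') := id

lemma doubleStar_le_completeBipartiteGraph : doubleStar a b ≤ completeBipartiteGraph α β := by
  rintro (_ | _) (_ | _) <;> simp

lemma connected_doubleStar : (doubleStar a b).Connected := by
  have hreach : ∀ p, (doubleStar a b).Reachable (.inl a) p := by
    rintro (x | y)
    · exact (Adj.reachable (by simp : (doubleStar a b).Adj (.inl a) (.inr b))).trans
        (Adj.reachable (by simp))
    · exact Adj.reachable (by simp)
  exact (connected_iff _).mpr ⟨fun p q => (hreach p).symm.trans (hreach q), ⟨.inl a⟩⟩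

lemma connected_completeBipartiteGraph [Nonempty α] [Nonempty β] :
    (completeBipartiteGraph α β).Connected :=
  (connected_doubleStar (a := Classical.arbitrary α) (b := Classical.arbitrary β)).mono
    doubleStar_le_completeBipartiteGraph

lemma bipartiteWith_of_le_completeBipartiteGraph {G : SimpleGraph (α ⊕ β)}
    (h : G ≤ completeBipartiteGraph α β) : bipartiteWith G (range Sum.inl) (range Sum.inr) := by
  refine ⟨range_inl_union_range_inr, isCompl_range_inl_range_inr.disjoint, ?_⟩
  rw [range_inl, range_inr]
  exact fun p q hadj => h hadj

lemma neighborSet_doubleStar_inl (hx : x ≠ a) :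
    (doubleStar a b).neighborSet (.inl x) = {.inr b} := by
  ext (_ | _) <;> simp [hx]

lemma neighborSet_doubleStar_inr (hy : y ≠ b) :
    (doubleStar a b).neighborSet (.inr y) = {.inl a} := by
  ext (_ | _) <;> simp [hy, eq_comm]

lemma neighborSet_completeBipartiteGraph_inl :
    (completeBipartiteGraph α β).neighborSet (.inl x) = range .inr := by
  ext (_ | _) <;> simp

lemma neighborSet_completeBipartiteGraph_inr :
    (completeBipartiteGraph α β).neighborSet (.inr y) = range .inl := by
  ext (_ | _) <;> simp

lemma pairwise_areTwins_range_inl :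
    (range (Sum.inl : α → α ⊕ β)).Pairwise (AreTwins (completeBipartiteGraph α β)) := by
  rintro _ ⟨x, rfl⟩ _ ⟨x', rfl⟩ -
  exact .of_neighborSet_eq (by simp only [neighborSet_completeBipartiteGraph_inl])

lemma pairwise_areTwins_range_inr :
    (range (Sum.inr : β → α ⊕ β)).Pairwise (AreTwins (completeBipartiteGraph α β)) := by
  rintro _ ⟨y, rfl⟩ _ ⟨y', rfl⟩ -
  exact .of_neighborSet_eq (by simp only [neighborSet_completeBipartiteGraph_inr])

end DoubleStar

section LocationDominationNumber

variable {α β : Type*} [Finite α] [Finite β] {a : α} {b : β}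

lemma exists_ne_ne_of_two_lt_card (h : 2 < Nat.card α) (a : α) :
    ∃ a₁ a₂, a₁ ≠ a ∧ a₂ ≠ a ∧ a₁ ≠ a₂ := by
  have : 1 < ({a}ᶜ : Set α).ncard := by rw [ncard_compl, ncard_singleton]; omega
  exact (one_lt_ncard_iff).mp this

lemma isLDSet.ncard_compl_le_two_of_doubleStar {S : Set (α ⊕ β)}
    (hS : isLDSet (doubleStar a b) S) : Sᶜ.ncard ≤ 2 := by
  have hcover : insert (.inr b) (Sum.inl '' {a}ᶜ) ∪ insert (.inl a) (Sum.inr '' {b}ᶜ) = univ := by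
    ext (x | y) <;> simpa using em _
  rw [compl_eq_univ_sdiff, ← hcover]
  refine ncard_union_sdiff_le_two (hS.subsingleton_insert_sdiff ?_)
    (hS.subsingleton_insert_sdiff ?_)
  · rintro _ ⟨x, hx, rfl⟩
    exact neighborSet_doubleStar_inl hx
  · rintro _ ⟨y, hy, rfl⟩
    exact neighborSet_doubleStar_inr hy

lemma isLDSet.ncard_compl_le_three_of_compl_doubleStar {S : Set (α ⊕ β)}
    (hS : isLDSet (doubleStar a b)ᶜ S) : Sᶜ.ncard ≤ 3 := by
  have hcover : (Sum.inl '' {a}ᶜ ∪ Sum.inr '' {b}ᶜ) ∪ {.inl a, .inr b} = univ := by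
    ext (x | y) <;> simpa using em _
  rw [compl_eq_univ_sdiff, ← hcover, union_sdiff_distrib]
  refine (ncard_union_le _ _).trans ?_
  by_cases hcenters : Sum.inl a ∈ S ∨ Sum.inr b ∈ S
  · have hleaves : ((Sum.inl '' {a}ᶜ ∪ Sum.inr '' {b}ᶜ) \ S).ncard ≤ 2 := by
      refine ncard_union_sdiff_le_two (hS.subsingleton_sdiff ?_) (hS.subsingleton_sdiff ?_)
      · rintro _ ⟨x, hx, rfl⟩ _ ⟨x', hx', rfl⟩ -
        exact areTwins_compl.mpr (.of_neighborSet_eq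
          (by rw [neighborSet_doubleStar_inl hx, neighborSet_doubleStar_inl hx']))
      · rintro _ ⟨y, hy, rfl⟩ _ ⟨y', hy', rfl⟩ -
        exact areTwins_compl.mpr (.of_neighborSet_eq
          (by rw [neighborSet_doubleStar_inr hy, neighborSet_doubleStar_inr hy']))
    have hc : ({Sum.inl a, Sum.inr b} \ S).ncard ≤ 1 := by
      rw [ncard_le_one_iff_subsingleton]
      rcases hcenters with h | h
      · rw [insert_sdiff_of_mem _ h]
        exact subsingleton_singleton.anti sdiff_subset
      · rw [pair_comm, insert_sdiff_of_mem _ h]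
        exact subsingleton_singleton.anti sdiff_subset
    omega
  · rw [not_or] at hcenters
    have hleaves : ((Sum.inl '' {a}ᶜ ∪ Sum.inr '' {b}ᶜ) \ S).ncard ≤ 1 := by
      refine ncard_le_one_iff_subsingleton.mpr (hS.subsingleton_of_subset_neighborSet.anti ?_)
      rintro _ ⟨⟨x, hx, rfl⟩ | ⟨y, hy, rfl⟩, hv⟩
      · refine ⟨hv, subset_neighborSet_compl hv ?_⟩
        rw [neighborSet_doubleStar_inl hx]
        exact disjoint_singleton_left.mpr hcenters.2
      · refine ⟨hv, subset_neighborSet_compl hv ?_⟩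
        rw [neighborSet_doubleStar_inr hy]
        exact disjoint_singleton_left.mpr hcenters.1
    have hc : ({Sum.inl a, Sum.inr b} \ S).ncard ≤ 2 :=
      (ncard_le_ncard sdiff_subset).trans (ncard_pair Sum.inl_ne_inr).le
    omega

variable [Nontrivial β]

lemma ldNum_compl_doubleStar (hα : 2 < Nat.card α) :
    ldNum (doubleStar a b)ᶜ = Nat.card (α ⊕ β) - 3 := by
  obtain ⟨a₁, a₂, h₁, h₂, h₁₂⟩ := exists_ne_ne_of_two_lt_card hα a
  obtain ⟨b₁, hb⟩ := exists_ne b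
  refine ldNum_eq_card_sub (S := {.inl a, .inl a₁, .inr b}ᶜ) ?_ ?_
    fun _ hT => hT.ncard_compl_le_three_of_compl_doubleStar
  · rw [isLDSet_compl_iff, pairwise_insert_of_symm, pairwise_pair_of_symm]
    simp only [mem_insert_iff, mem_singleton_iff, forall_eq_or_imp, forall_eq]
    refine ⟨⟨⟨.inl a₂, ?_, ?_⟩, ⟨.inl a₂, ?_, ?_⟩, ⟨.inr b₁, ?_, ?_⟩⟩,
      fun _ => neighborSet_sdiff_ne_of_adj (x := .inl a₂) ?_ ?_ ?_,
      fun _ => (neighborSet_sdiff_ne_of_adj (x := .inr b₁) ?_ ?_ ?_).symm,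
      fun _ => neighborSet_sdiff_ne_of_adj (x := .inl a₂) ?_ ?_ ?_⟩
    all_goals simp [h₁, h₂, h₁₂, hb, h₂.symm, h₁₂.symm, hb.symm]
  · rw [compl_compl, ncard_insert_of_notMem (by simp [h₁.symm]), ncard_pair (by simp)]

variable [Nontrivial α]

lemma ldNum_doubleStar : ldNum (doubleStar a b) = Nat.card (α ⊕ β) - 2 := by
  obtain ⟨a₁, ha⟩ := exists_ne a
  obtain ⟨b₁, hb⟩ := exists_ne b
  refine ldNum_eq_card_sub (S := {.inl a₁, .inr b₁}ᶜ) ?_ (by simp)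
    fun _ hT => hT.ncard_compl_le_two_of_doubleStar
  rw [isLDSet_compl_iff, pairwise_pair_of_symm]
  refine ⟨?_, fun _ => neighborSet_sdiff_ne_of_adj (x := .inr b) (by simp [hb.symm]) (by simp)
    (by simp)⟩
  simp only [mem_insert_iff, mem_singleton_iff, forall_eq_or_imp, forall_eq]
  exact ⟨⟨.inr b, by simp [hb.symm], by simp⟩, ⟨.inl a, by simp [ha.symm], by simp⟩⟩

lemma ldNum_completeBipartiteGraph :
    ldNum (completeBipartiteGraph α β) = Nat.card (α ⊕ β) - 2 := by
  obtain ⟨a, a₁, ha⟩ := exists_pair_ne α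
  obtain ⟨b, b₁, hb⟩ := exists_pair_ne β
  refine ldNum_eq_card_sub (S := {.inl a, .inr b}ᶜ) ?_ (by simp) fun _ hT =>
    hT.ncard_compl_le_two_of_pairwise_areTwins range_inl_union_range_inr
      pairwise_areTwins_range_inl pairwise_areTwins_range_inr
  rw [isLDSet_compl_iff, pairwise_pair_of_symm]
  refine ⟨?_, fun _ => neighborSet_sdiff_ne_of_adj (x := .inr b₁) (by simp [hb.symm]) (by simp)
    (by simp)⟩
  simp only [mem_insert_iff, mem_singleton_iff, forall_eq_or_imp, forall_eq]
  exact ⟨⟨.inr b₁, by simp [hb.symm], by simp⟩, ⟨.inl a₁, by simp [ha.symm], by simp⟩⟩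

lemma ldNum_compl_completeBipartiteGraph :
    ldNum (completeBipartiteGraph α β)ᶜ = Nat.card (α ⊕ β) - 2 := by
  obtain ⟨a, a₁, ha⟩ := exists_pair_ne α
  obtain ⟨b, b₁, hb⟩ := exists_pair_ne β
  refine ldNum_eq_card_sub (S := {.inl a, .inr b}ᶜ) ?_ (by simp) fun _ hT =>
    hT.ncard_compl_le_two_of_pairwise_areTwins range_inl_union_range_inr
      (pairwise_areTwins_range_inl.mono' fun _ _ => areTwins_compl.mpr)
      (pairwise_areTwins_range_inr.mono' fun _ _ => areTwins_compl.mpr)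
  rw [isLDSet_compl_iff, pairwise_pair_of_symm]
  refine ⟨?_, fun _ => neighborSet_sdiff_ne_of_adj (x := .inl a₁) (by simp [ha.symm])
    (by simp [ha]) (by simp)⟩
  simp only [mem_insert_iff, mem_singleton_iff, forall_eq_or_imp, forall_eq]
  exact ⟨⟨.inl a₁, by simp [ha.symm], by simp [ha]⟩, ⟨.inr b₁, by simp [hb.symm], by simp [hb]⟩⟩

end LocationDominationNumber

theorem stmt19 (r s : ℕ) (hr : 3 ≤ r) (hrs : r ≤ s) :
    (∃ (V : Type) (_ : Fintype V) (G : SimpleGraph V) (U W : Set V),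
      G.Connected ∧ bipartiteWith G U W ∧ U.ncard = r ∧ W.ncard = s ∧
      ldNum Gᶜ + 1 = ldNum G) ∧
    (∃ (V : Type) (_ : Fintype V) (G : SimpleGraph V) (U W : Set V),
      G.Connected ∧ bipartiteWith G U W ∧ U.ncard = r ∧ W.ncard = s ∧
      ldNum Gᶜ = ldNum G) := by
  have : Nontrivial (Fin r) := Fin.nontrivial_iff_two_le.mpr (by omega)
  have : Nontrivial (Fin s) := Fin.nontrivial_iff_two_le.mpr (by omega)
  have hU : (range (Sum.inl : Fin r → Fin r ⊕ Fin s)).ncard = r := by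
    simp [ncard_range_of_injective Sum.inl_injective]
  have hW : (range (Sum.inr : Fin s → Fin r ⊕ Fin s)).ncard = s := by
    simp [ncard_range_of_injective Sum.inr_injective]
  have hcard : Nat.card (Fin r ⊕ Fin s) = r + s := by simp
  have hr' : 2 < Nat.card (Fin r) := by simp; omega
  let a : Fin r := ⟨0, by omega⟩
  let b : Fin s := ⟨0, by omega⟩
  refine ⟨⟨Fin r ⊕ Fin s, inferInstance, doubleStar a b, range .inl, range .inr,
      connected_doubleStar, bipartiteWith_of_le_completeBipartiteGraph
        doubleStar_le_completeBipartiteGraph, hU, hW, ?_⟩,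
    ⟨Fin r ⊕ Fin s, inferInstance, completeBipartiteGraph (Fin r) (Fin s), range .inl, range .inr,
      connected_completeBipartiteGraph, bipartiteWith_of_le_completeBipartiteGraph le_rfl,
      hU, hW, by rw [ldNum_compl_completeBipartiteGraph, ldNum_completeBipartiteGraph]⟩⟩
  rw [ldNum_compl_doubleStar hr', ldNum_doubleStar, hcard]
  omega
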